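/- arXiv:1102.1208 — 2 statements merged into one kernel-verified Lean document; each statement's English description precedes it below -/
import Mathlib

section
/- For the function r(n) = log n / log log n, for every function k : ℕ → ℕ with k(n) ≥ 1, and for all sufficiently large n, at least one of the following holds: (1) r(n^{k(n)}) ≥ k(n), or (2) r(n^{k(n)}) · log(n^{k(n)}) ≥ c·n for some fixed constant c > 0. -/
open Filter Real

/-- For r(n) = log n / log log n and any k : ℕ → ℕ with k(n) ≥ 1, there is a
constant c > 0 such that for all sufficiently large n at least one of
r(n^{k(n)}) ≥ k(n) or r(n^{k(n)}) · log(n^{k(n)}) ≥ c·n holds. -/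
theorem reduction_method_limit (k : ℕ → ℕ) (hk : ∀ n, 1 ≤ k n) :
    ∃ c : ℝ, 0 < c ∧ ∀ᶠ n : ℕ in atTop,
      (k n : ℝ) ≤
          Real.log ((n ^ k n : ℕ) : ℝ) / Real.log (Real.log ((n ^ k n : ℕ) : ℝ))
      ∨ c * (n : ℝ) ≤
          (Real.log ((n ^ k n : ℕ) : ℝ) / Real.log (Real.log ((n ^ k n : ℕ) : ℝ)))
            * Real.log ((n ^ k n : ℕ) : ℝ) := by
  refine ⟨1, one_pos, ?_⟩
  filter_upwards [eventually_ge_atTop 3] with n hn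
  have hk1 : (1 : ℝ) ≤ (k n : ℝ) := by exact_mod_cast hk n
  have hlogn : (1 : ℝ) < Real.log n := by
    have : Real.exp 1 ≤ (n : ℝ) := by
      have : (3 : ℝ) ≤ (n : ℝ) := by exact_mod_cast hn
      linarith [Real.exp_one_lt_d9]
    calc (1:ℝ) < Real.log 3 := by
            rw [show (1:ℝ) = Real.log (Real.exp 1) by rw [Real.log_exp]]
            exact Real.log_lt_log (Real.exp_pos 1) (by linarith [Real.exp_one_lt_d9])
      _ ≤ Real.log n := Real.log_le_log (by norm_num) (by exact_mod_cast hn)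
  have hcast : ((n ^ k n : ℕ) : ℝ) = ((n : ℝ)) ^ (k n) := by push_cast; ring
  have hlogN : Real.log ((n ^ k n : ℕ) : ℝ) = (k n : ℝ) * Real.log n := by
    rw [hcast, Real.log_pow]
  set x : ℝ := (k n : ℝ) * Real.log n with hx
  have hx1 : (1 : ℝ) < x := by nlinarith
  have hL : (0 : ℝ) < Real.log x := Real.log_pos hx1
  rw [hlogN]
  rcases le_or_gt x (n : ℝ) with h | h
  · left
    have hLn : Real.log x ≤ Real.log n := Real.log_le_log (by linarith) h
    rw [le_div_iff₀ hL]
    nlinarith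
  · right
    have hLx : Real.log x ≤ x := by linarith [Real.log_le_sub_one_of_pos (by linarith : (0:ℝ) < x)]
    rw [div_mul_eq_mul_div, le_div_iff₀ hL]
    nlinarith
end

section
/- Let A, B ⊆ {1, ..., l} be disjoint finite sets of naturals with |A ∪ B| = w odd, and let m be the median of A ∪ B. Define A' = (B + w) ∪ (B' + w + l) ∪ {1,...,w} ⊆ {1,...,2w+2l} if a bit b = 0 (and A' = (B + w) ∪ (B' + w + l) ∪ {2w+2l−w+1,...,2w+2l} if b = 1), and B'' = (A + w) ∪ (A'' + w + l), where (A, B) and (A'', B') are two instances over {1,...,l} each with w elements total. Then the median of A' ∪ B'' equals (median of A ∪ B) + w if b = 0, and equals (median of A'' ∪ B') + w + l if b = 1. -/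
/-- The median of a finite set of naturals of odd size 2N+1: its (N+1)-th
smallest element. -/
def medianFs (S : Finset ℕ) : ℕ := (S.sort (· ≤ ·)).getD (S.card / 2) 0

/-! Sorting turns a union of blockwise ordered sets into a concatenation, so when
`P < S < Q` blockwise and `#P = #Q`, the middle element of `P ∪ S ∪ Q` is that of `S`.
In the reduction the two translated instances are such consecutive blocks, and the `w`
padding numbers form a block below both (`b = false`) or above both (`b = true`). -/

open Finset

theorem Finset.sort_union_of_forall_lt {α : Type*} [LinearOrder α] {X Y : Finset α}
    (h : ∀ x ∈ X, ∀ y ∈ Y, x < y) : (X ∪ Y).sort = X.sort ++ Y.sort := by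
  have hlt : (X.sort ++ Y.sort).Pairwise (· < ·) :=
    List.pairwise_append.2 ⟨(sortedLT_sort X).pairwise, (sortedLT_sort Y).pairwise,
      fun x hx y hy => h x ((mem_sort _).1 hx) y ((mem_sort _).1 hy)⟩
  simpa [List.toFinset_append] using
    (List.toFinset_sort (· ≤ ·) hlt.nodup).2 (hlt.imp le_of_lt)

theorem Finset.sort_image_add_right {α : Type*} [AddCommMonoid α] [LinearOrder α]
    [IsOrderedCancelAddMonoid α] (S : Finset α) (c : α) :
    (S.image (· + c)).sort = S.sort.map (· + c) := by
  have h := StrictMonoOn.map_finsetSort (addRightEmbedding c) S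
    fun _ _ _ _ hlt => (add_lt_add_iff_right c).2 hlt
  rw [map_eq_image] at h
  exact h.symm

theorem Finset.forall_lt_of_subset_Icc {α : Type*} [Preorder α] [LocallyFiniteOrder α]
    {X Y : Finset α} {a b c d : α} (hX : X ⊆ Icc a b) (hY : Y ⊆ Icc c d) (hbc : b < c) :
    ∀ x ∈ X, ∀ y ∈ Y, x < y := fun _ hx _ hy =>
  ((mem_Icc.1 (hX hx)).2.trans_lt hbc).trans_le (mem_Icc.1 (hY hy)).1

theorem medianFs_image_add_right {S : Finset ℕ} (hS : S.Nonempty) (c : ℕ) :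
    medianFs (S.image (· + c)) = medianFs S + c := by
  have hlt : #S / 2 < S.sort.length := by
    rw [length_sort]; exact Nat.div_lt_self hS.card_pos one_lt_two
  rw [medianFs, medianFs, sort_image_add_right, card_image_of_injective _ (add_left_injective c),
    List.getD_eq_getElem _ _ (by simpa using hlt), List.getElem_map,
    List.getD_eq_getElem _ _ hlt]

theorem medianFs_union_of_forall_lt {P S Q : Finset ℕ} (hPS : ∀ x ∈ P, ∀ y ∈ S, x < y)
    (hSQ : ∀ x ∈ S, ∀ y ∈ Q, x < y) (hPQ : #P = #Q) (hS : S.Nonempty) :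
    medianFs (P ∪ S ∪ Q) = medianFs S := by
  obtain ⟨s, hs⟩ := hS
  have hPS_Q : ∀ x ∈ P ∪ S, ∀ y ∈ Q, x < y := by
    intro x hx y hy
    rcases mem_union.1 hx with hx | hx
    · exact (hPS x hx s hs).trans (hSQ s hs y hy)
    · exact hSQ x hx y hy
  have hsort : (P ∪ S ∪ Q).sort = P.sort ++ S.sort ++ Q.sort := by
    rw [sort_union_of_forall_lt hPS_Q, sort_union_of_forall_lt hPS]
  have hcard : #(P ∪ S ∪ Q) = #P + #S + #Q := by
    rw [← length_sort (· ≤ ·), hsort]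
    simp only [List.length_append, length_sort]
  have hpos : 0 < #S := card_pos.2 ⟨s, hs⟩
  have hidx : (#P + #S + #Q) / 2 = #P + #S / 2 := by omega
  rw [medianFs, medianFs, hsort, hcard, hidx,
    List.getD_append _ _ _ _ (by simp only [List.length_append, length_sort]; omega),
    List.getD_append_right _ _ _ _ (by rw [length_sort]; omega), length_sort,
    Nat.add_sub_cancel_left]

theorem strategy_to_median_step_general (l w : ℕ) (A B A₂ B₂ : Finset ℕ)
    (hA : A ⊆ Finset.Icc 1 l) (hB : B ⊆ Finset.Icc 1 l)
    (hA₂ : A₂ ⊆ Finset.Icc 1 l) (hB₂ : B₂ ⊆ Finset.Icc 1 l)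
    (hw : (A ∪ B).card = w) (hw₂ : (A₂ ∪ B₂).card = w) (hodd : Odd w)
    (b : Bool) :
    medianFs ((B.image (· + w) ∪ B₂.image (· + (w + l)) ∪
        (if b then Finset.Icc (2 * w + 2 * l - w + 1) (2 * w + 2 * l)
         else Finset.Icc 1 w)) ∪
      (A.image (· + w) ∪ A₂.image (· + (w + l)))) =
    (if b then medianFs (A₂ ∪ B₂) + w + l else medianFs (A ∪ B) + w) := by
  have hne : (A ∪ B).Nonempty := card_pos.1 (hw ▸ hodd.pos)
  have hne₂ : (A₂ ∪ B₂).Nonempty := card_pos.1 (hw₂ ▸ hodd.pos)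
  have hshift {S : Finset ℕ} (hS : S ⊆ Icc 1 l) (c : ℕ) :
      S.image (· + c) ⊆ Icc (1 + c) (l + c) :=
    image_add_right_Icc 1 l c ▸ image_subset_image hS
  have hI := hshift (union_subset hA hB) w
  have hI₂ := hshift (union_subset hA₂ hB₂) (w + l)
  have hcard {S : Finset ℕ} (c : ℕ) : #(S.image (· + c)) = #S :=
    card_image_of_injective _ (add_left_injective c)
  have hset (P : Finset ℕ) : B.image (· + w) ∪ B₂.image (· + (w + l)) ∪ P ∪
      (A.image (· + w) ∪ A₂.image (· + (w + l))) =
      P ∪ (A ∪ B).image (· + w) ∪ (A₂ ∪ B₂).image (· + (w + l)) := by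
    simp only [image_union]; ac_rfl
  rw [hset]
  cases b
  · rw [if_neg Bool.false_ne_true, if_neg Bool.false_ne_true,
      medianFs_union_of_forall_lt (forall_lt_of_subset_Icc subset_rfl hI (by omega))
        (forall_lt_of_subset_Icc hI hI₂ (by omega)) (by rw [Nat.card_Icc, hcard, hw₂]; omega)
        (hne.image _),
      medianFs_image_add_right hne]
  · rw [if_pos rfl, if_pos rfl, union_assoc, union_comm,
      medianFs_union_of_forall_lt (forall_lt_of_subset_Icc hI hI₂ (by omega))
        (forall_lt_of_subset_Icc hI₂ subset_rfl (by omega))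
        (by rw [Nat.card_Icc, hcard, hw]; omega) (hne₂.image _),
      medianFs_image_add_right hne₂, add_assoc]

/-- Correctness of the inductive step of the Strategy-to-Median reduction.
Given two sub-instances (A, B) and (A₂, B₂) over {1,…,l}, each with w elements
in total (w odd), and a bit b, set
A' = (B + w) ∪ (B₂ + w + l) ∪ ({1,…,w} if b = 0, {2w+2l−w+1,…,2w+2l} if b = 1),
B' = (A + w) ∪ (A₂ + w + l).
Then median(A' ∪ B') = median(A ∪ B) + w if b = 0,
and median(A' ∪ B') = median(A₂ ∪ B₂) + w + l if b = 1. -/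
theorem strategy_to_median_step (l w : ℕ) (A B A₂ B₂ : Finset ℕ)
    (hA : A ⊆ Finset.Icc 1 l) (hB : B ⊆ Finset.Icc 1 l)
    (hA₂ : A₂ ⊆ Finset.Icc 1 l) (hB₂ : B₂ ⊆ Finset.Icc 1 l)
    (hAB : Disjoint A B) (hA₂B₂ : Disjoint A₂ B₂)
    (hw : (A ∪ B).card = w) (hw₂ : (A₂ ∪ B₂).card = w) (hodd : Odd w)
    (b : Bool) :
    medianFs ((B.image (· + w) ∪ B₂.image (· + (w + l)) ∪
        (if b then Finset.Icc (2 * w + 2 * l - w + 1) (2 * w + 2 * l)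
         else Finset.Icc 1 w)) ∪
      (A.image (· + w) ∪ A₂.image (· + (w + l)))) =
    (if b then medianFs (A₂ ∪ B₂) + w + l else medianFs (A ∪ B) + w) :=
  strategy_to_median_step_general l w A B A₂ B₂ hA hB hA₂ hB₂ hw hw₂ hodd b
end
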